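/- arXiv:1309.4111 — 4 statements merged into one kernel-verified Lean document; each statement's English description precedes it below -/
import Mathlib

section
/- Let B be a K×K symmetric matrix with nonnegative entries, Z ∈ {0,1}^{N×K} a membership matrix (each row has exactly one 1), Θ ∈ R^{N×N} a diagonal matrix with positive diagonal entries θ_i, and define 𝒜 = Θ Z B Z^T Θ. Let 𝒟 be the diagonal matrix with 𝒟_ii = Σ_j 𝒜_ij, let τ ≥ 0, 𝒟_τ = 𝒟 + τI, and define D_B as the K×K diagonal matrix with [D_B]_ss = Σ_t B_st, assuming the identifiability constraint Σ_i θ_i δ_{z_i,r} = 1 for each block r and [D_B]_ss > 0 for all s. Then 𝒟_ii = θ_i [D_B]_{z_i z_i}, and the regularized population Laplacian ℒ_τ = 𝒟_τ^{-1/2} 𝒜 𝒟_τ^{-1/2} satisfies ℒ_τ = Θ_τ^{1/2} Z B_L Z^T Θ_τ^{1/2}, where B_L = D_B^{-1/2} B D_B^{-1/2} and Θ_τ is diagonal with [Θ_τ]_ii = θ_i^2/(θ_i + τ/[D_B]_{z_i z_i}). -/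
open Matrix

/-- Explicit form of the regularized population Laplacian under the DC-SBM. -/
theorem dcsbm_population_laplacian_explicit_form
    (N K : ℕ) (z : Fin N → Fin K) (θ : Fin N → ℝ) (hθ : ∀ i, 0 < θ i)
    (B : Matrix (Fin K) (Fin K) ℝ) (hBsym : B.IsSymm) (hBnn : ∀ s t, 0 ≤ B s t)
    (τ : ℝ) (hτ : 0 ≤ τ)
    -- membership matrix
    (Z : Matrix (Fin N) (Fin K) ℝ) (hZ : ∀ i k, Z i k = if z i = k then 1 else 0)
    -- population adjacency matrix
    (𝒜 : Matrix (Fin N) (Fin N) ℝ)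
    (h𝒜 : 𝒜 = Matrix.diagonal θ * Z * B * Zᵀ * Matrix.diagonal θ)
    -- expected degrees and block degrees
    (𝒟 : Fin N → ℝ) (h𝒟 : ∀ i, 𝒟 i = ∑ j, 𝒜 i j)
    (DB : Fin K → ℝ) (hDB : ∀ s, DB s = ∑ t, B s t) (hDBpos : ∀ s, 0 < DB s)
    -- identifiability constraint: θ's sum to one within each block
    (hident : ∀ r : Fin K, (∑ i, if z i = r then θ i else 0) = 1)
    -- regularized degree parameters
    (θτ : Fin N → ℝ) (hθτ : ∀ i, θτ i = (θ i) ^ 2 / (θ i + τ / DB (z i)))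
    -- normalized block matrix
    (BL : Matrix (Fin K) (Fin K) ℝ)
    (hBL : BL = Matrix.diagonal (fun s => (Real.sqrt (DB s))⁻¹) * B *
        Matrix.diagonal (fun s => (Real.sqrt (DB s))⁻¹)) :
    (∀ i, 𝒟 i = θ i * DB (z i)) ∧
    Matrix.diagonal (fun i => (Real.sqrt (𝒟 i + τ))⁻¹) * 𝒜 *
        Matrix.diagonal (fun i => (Real.sqrt (𝒟 i + τ))⁻¹) =
      Matrix.diagonal (fun i => Real.sqrt (θτ i)) * Z * BL * Zᵀ *
        Matrix.diagonal (fun i => Real.sqrt (θτ i)) := by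
  -- entry formula for diag a * Z * M * Zᵀ * diag b
  have hentry : ∀ (a b : Fin N → ℝ) (M : Matrix (Fin K) (Fin K) ℝ) (i j : Fin N),
      (Matrix.diagonal a * Z * M * Zᵀ * Matrix.diagonal b) i j
        = a i * M (z i) (z j) * b j := by
    intro a b M i j
    simp only [Matrix.mul_apply, Matrix.transpose_apply, hZ, Matrix.diagonal_apply,
      ite_mul, mul_ite, Finset.sum_ite_eq, Finset.sum_ite_eq', Finset.mul_sum,
      Finset.sum_mul, mul_assoc, mul_one, mul_zero, one_mul, zero_mul,
      Finset.mem_univ, if_true, Finset.sum_ite_irrel, Finset.sum_const_zero]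
    rw [Finset.sum_comm]
    simp [Finset.sum_ite_eq, Finset.sum_ite_eq']
  have hA : ∀ i j, 𝒜 i j = θ i * B (z i) (z j) * θ j := by
    intro i j; rw [h𝒜, hentry]
  have key : ∀ s, (∑ j, B s (z j) * θ j) = DB s := by
    intro s
    rw [hDB]
    calc ∑ j, B s (z j) * θ j
        = ∑ j, ∑ t, if z j = t then B s t * θ j else 0 := by
          refine Finset.sum_congr rfl fun j _ => ?_
          simp [Finset.sum_ite_eq]
      _ = ∑ t, ∑ j, if z j = t then B s t * θ j else 0 := Finset.sum_comm
      _ = ∑ t, B s t * ∑ j, (if z j = t then θ j else 0) := by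
          refine Finset.sum_congr rfl fun t _ => ?_
          rw [Finset.mul_sum]
          refine Finset.sum_congr rfl fun j _ => ?_
          split <;> simp
      _ = ∑ t, B s t := by simp [hident]
  have hD : ∀ i, 𝒟 i = θ i * DB (z i) := by
    intro i
    rw [h𝒟]
    calc ∑ j, 𝒜 i j = ∑ j, θ i * (B (z i) (z j) * θ j) := by
          refine Finset.sum_congr rfl fun j _ => ?_
          rw [hA]; ring
      _ = θ i * ∑ j, B (z i) (z j) * θ j := by rw [Finset.mul_sum]
      _ = θ i * DB (z i) := by rw [key]
  refine ⟨hD, ?_⟩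
  have hBLe : ∀ i j : Fin N, BL (z i) (z j)
      = (Real.sqrt (DB (z i)))⁻¹ * B (z i) (z j) * (Real.sqrt (DB (z j)))⁻¹ := by
    intro i j
    rw [hBL]
    simp [Matrix.mul_apply, Matrix.diagonal_apply, ite_mul, mul_ite,
      Finset.sum_ite_eq, Finset.sum_ite_eq']
  have hkey : ∀ i, (Real.sqrt (𝒟 i + τ))⁻¹ * θ i
      = Real.sqrt (θτ i) * (Real.sqrt (DB (z i)))⁻¹ := by
    intro i
    have hd := hDBpos (z i)
    have ht := hθ i
    have hden : 0 < θ i * DB (z i) + τ := by positivity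
    rw [hD i, hθτ i]
    have h1 : θ i ^ 2 / (θ i + τ / DB (z i))
        = θ i ^ 2 * DB (z i) / (θ i * DB (z i) + τ) := by
      rw [div_eq_div_iff (by positivity) hden.ne']
      field_simp
    rw [h1, Real.sqrt_div (by positivity), Real.sqrt_mul (by positivity),
      Real.sqrt_sq ht.le]
    have h2 : Real.sqrt (DB (z i)) ≠ 0 := by positivity
    have h3 : Real.sqrt (θ i * DB (z i) + τ) ≠ 0 := by positivity
    field_simp
  ext i j
  have L : (Matrix.diagonal (fun i => (Real.sqrt (𝒟 i + τ))⁻¹) * 𝒜 *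
      Matrix.diagonal (fun i => (Real.sqrt (𝒟 i + τ))⁻¹)) i j
      = (Real.sqrt (𝒟 i + τ))⁻¹ * 𝒜 i j * (Real.sqrt (𝒟 j + τ))⁻¹ := by
    simp [Matrix.mul_apply, Matrix.diagonal_apply, ite_mul, mul_ite,
      Finset.sum_ite_eq, Finset.sum_ite_eq']
  rw [L, hentry, hA, hBLe]
  linear_combination (B (z i) (z j) * ((Real.sqrt (𝒟 j + τ))⁻¹ * θ j)) * hkey i
    + (B (z i) (z j) * (Real.sqrt (θτ i) * (Real.sqrt (DB (z i)))⁻¹)) * hkey j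
end

section
/- Let 𝒳_τ = Θ_τ^{1/2} Z (Z^T Θ_τ Z)^{-1/2} U with U ∈ R^{K×K} orthogonal. Then the i'th row of 𝒳_τ has Euclidean norm ‖𝒳_τ^i‖₂ = ([Θ_τ]_ii / [Z^T Θ_τ Z]_{z_i z_i})^{1/2} = (θ_i^τ / Σ_j θ_j^τ δ_{z_j,z_i})^{1/2}, and the row-normalized matrix 𝒳*_τ (each row divided by its norm) satisfies 𝒳*_τ = Z U. In particular, rows i and j of 𝒳*_τ are equal if z_i = z_j and orthogonal (with unit norms) if z_i ≠ z_j. -/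
open Matrix

/-- Row norms of 𝒳τ and its row-normalized version 𝒳τ* = Z U. -/
theorem dcsbm_population_eigenvector_row_norms_and_normalization
    (N K : ℕ) (z : Fin N → Fin K)
    (θτ : Fin N → ℝ) (hθτ : ∀ i, 0 < θτ i)
    (Z : Matrix (Fin N) (Fin K) ℝ) (hZ : ∀ i k, Z i k = if z i = k then 1 else 0)
    (d : Fin K → ℝ) (hdpos : ∀ s, 0 < d s)
    (hd : Zᵀ * Matrix.diagonal θτ * Z = Matrix.diagonal d)
    (U : Matrix (Fin K) (Fin K) ℝ) (hU : Uᵀ * U = 1) (hU' : U * Uᵀ = 1)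
    (𝒳τ : Matrix (Fin N) (Fin K) ℝ)
    (h𝒳τ : 𝒳τ = Matrix.diagonal (fun i => Real.sqrt (θτ i)) * Z *
        Matrix.diagonal (fun s => (Real.sqrt (d s))⁻¹) * U)
    -- row-normalized version of 𝒳τ
    (𝒳τstar : Matrix (Fin N) (Fin K) ℝ)
    (hstar : ∀ i s, 𝒳τstar i s = 𝒳τ i s / Real.sqrt (∑ t, (𝒳τ i t) ^ 2)) :
    (∀ i, Real.sqrt (∑ t, (𝒳τ i t) ^ 2) = Real.sqrt (θτ i / d (z i))) ∧
    (∀ i, Real.sqrt (∑ t, (𝒳τ i t) ^ 2) =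
        Real.sqrt (θτ i / ∑ j, if z j = z i then θτ j else 0)) ∧
    𝒳τstar = Z * U ∧
    (∀ i j, z i = z j → (fun s => 𝒳τstar i s) = fun s => 𝒳τstar j s) ∧
    (∀ i j, z i ≠ z j →
      (∑ s, 𝒳τstar i s * 𝒳τstar j s = 0) ∧
      (∑ s, (𝒳τstar i s) ^ 2 = 1) ∧ (∑ s, (𝒳τstar j s) ^ 2 = 1)) := by
  -- entry formula for 𝒳τ
  have hentry : ∀ i s, 𝒳τ i s = Real.sqrt (θτ i) * (Real.sqrt (d (z i)))⁻¹ * U (z i) s := by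
    intro i s
    rw [h𝒳τ, Matrix.mul_apply]
    rw [Finset.sum_eq_single (z i)]
    · simp [Matrix.mul_diagonal, Matrix.diagonal_mul, hZ]
    · intro k _ hk
      simp [Matrix.mul_diagonal, Matrix.diagonal_mul, hZ, Ne.symm hk]
    · simp
  -- rows of U are orthonormal
  have hUrow : ∀ a b, ∑ s, U a s * U b s = if a = b then (1:ℝ) else 0 := by
    intro a b
    have := congrFun (congrFun hU' a) b
    simpa [Matrix.mul_apply, Matrix.one_apply, Matrix.transpose_apply] using this
  -- row sum of squares
  have hsum : ∀ i, ∑ t, (𝒳τ i t) ^ 2 = θτ i / d (z i) := by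
    intro i
    have h1 : ∑ t, (𝒳τ i t) ^ 2
        = (Real.sqrt (θτ i) * (Real.sqrt (d (z i)))⁻¹) ^ 2 * ∑ t, U (z i) t ^ 2 := by
      rw [Finset.mul_sum]
      exact Finset.sum_congr rfl (fun t _ => by rw [hentry]; ring)
    have h2 : ∑ t, U (z i) t ^ 2 = 1 := by
      have := hUrow (z i) (z i); simpa [pow_two] using this
    rw [h1, h2, mul_one, mul_pow, Real.sq_sqrt (hθτ i).le, ← Real.sqrt_inv,
      Real.sq_sqrt (inv_nonneg.2 (hdpos (z i)).le), div_eq_mul_inv]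
  have hd' : ∀ i, d (z i) = ∑ j, if z j = z i then θτ j else 0 := by
    intro i
    have := congrFun (congrFun hd (z i)) (z i)
    simp only [Matrix.mul_apply, Matrix.transpose_apply, Matrix.diagonal_apply,
      Matrix.diagonal_apply_eq, mul_ite, mul_zero, Finset.sum_ite_eq',
      Finset.mem_univ, if_true] at this
    rw [← this]
    refine Finset.sum_congr rfl (fun j _ => ?_)
    simp only [hZ]
    split <;> simp
  have hnorm : ∀ i, Real.sqrt (∑ t, (𝒳τ i t) ^ 2) = Real.sqrt (θτ i / d (z i)) := by
    intro i; rw [hsum]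
  -- 𝒳τstar entries
  have hstarentry : ∀ i s, 𝒳τstar i s = U (z i) s := by
    intro i s
    have hθs : Real.sqrt (θτ i) ≠ 0 := ne_of_gt (Real.sqrt_pos.2 (hθτ i))
    have hds : Real.sqrt (d (z i)) ≠ 0 := ne_of_gt (Real.sqrt_pos.2 (hdpos (z i)))
    rw [hstar, hnorm, hentry, Real.sqrt_div (hθτ i).le]
    field_simp
  refine ⟨hnorm, fun i => by rw [hnorm, hd'], ?_, ?_, ?_⟩
  · ext i s
    rw [hstarentry, Matrix.mul_apply, Finset.sum_eq_single (z i)]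
    · simp [hZ]
    · intro k _ hk; simp [hZ, Ne.symm hk]
    · simp
  · intro i j h
    funext s
    rw [hstarentry, hstarentry, h]
  · intro i j h
    have hne : z i ≠ z j := h
    refine ⟨?_, ?_, ?_⟩
    · simp only [hstarentry]
      simpa [hne] using hUrow (z i) (z j)
    · simp only [hstarentry, pow_two]
      simpa using hUrow (z i) (z i)
    · simp only [hstarentry, pow_two]
      simpa using hUrow (z j) (z j)
end

section
/- If two rows i, j of 𝒳_τ = Θ_τ^{1/2} Z (Z^T Θ_τ Z)^{-1/2} U belong to the same block (z_i = z_j), then 𝒳_τ^i and 𝒳_τ^j are positive scalar multiples of each other (they point in the same direction); if z_i ≠ z_j, then ⟨𝒳_τ^i, 𝒳_τ^j⟩ = 0. -/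
open Matrix

/-- Rows of 𝒳τ in the same block are positive multiples of each other;
rows in different blocks are orthogonal. -/
theorem dcsbm_population_eigenvector_rows_same_direction
    (N K : ℕ) (z : Fin N → Fin K)
    (θτ : Fin N → ℝ) (hθτ : ∀ i, 0 < θτ i)
    (Z : Matrix (Fin N) (Fin K) ℝ) (hZ : ∀ i k, Z i k = if z i = k then 1 else 0)
    (d : Fin K → ℝ) (hdpos : ∀ s, 0 < d s)
    (hd : Zᵀ * Matrix.diagonal θτ * Z = Matrix.diagonal d)
    (U : Matrix (Fin K) (Fin K) ℝ) (hU : Uᵀ * U = 1) (hU' : U * Uᵀ = 1)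
    (𝒳τ : Matrix (Fin N) (Fin K) ℝ)
    (h𝒳τ : 𝒳τ = Matrix.diagonal (fun i => Real.sqrt (θτ i)) * Z *
        Matrix.diagonal (fun s => (Real.sqrt (d s))⁻¹) * U) :
    (∀ i j, z i = z j →
      ∃ c : ℝ, 0 < c ∧ (fun s => 𝒳τ i s) = c • fun s => 𝒳τ j s) ∧
    (∀ i j, z i ≠ z j → ∑ s, 𝒳τ i s * 𝒳τ j s = 0) := by
  have key : ∀ i s, 𝒳τ i s = Real.sqrt (θτ i) * (Real.sqrt (d (z i)))⁻¹ * U (z i) s := by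
    intro i s
    rw [h𝒳τ, Matrix.mul_apply]
    simp only [Matrix.mul_diagonal, Matrix.diagonal_mul, hZ]
    rw [Finset.sum_eq_single (z i)]
    · simp
    · intro b _ hb; simp [Ne.symm hb]
    · simp
  have hq : ∀ i : Fin N, 0 < Real.sqrt (θτ i) * (Real.sqrt (d (z i)))⁻¹ := by
    intro i
    exact mul_pos (Real.sqrt_pos.2 (hθτ i)) (inv_pos.2 (Real.sqrt_pos.2 (hdpos _)))
  constructor
  · intro i j hij
    refine ⟨(Real.sqrt (θτ i) * (Real.sqrt (d (z i)))⁻¹) /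
      (Real.sqrt (θτ j) * (Real.sqrt (d (z j)))⁻¹), div_pos (hq i) (hq j), ?_⟩
    funext s
    have h1 : Real.sqrt (θτ j) ≠ 0 := ne_of_gt (Real.sqrt_pos.2 (hθτ j))
    have h2 : Real.sqrt (d (z j)) ≠ 0 := ne_of_gt (Real.sqrt_pos.2 (hdpos _))
    simp only [Pi.smul_apply, smul_eq_mul, key, hij]
    field_simp
  · intro i j hij
    have horth : ∑ s, U (z i) s * U (z j) s = 0 := by
      have := congrFun (congrFun hU' (z i)) (z j)
      simpa [Matrix.mul_apply, Matrix.one_apply, hij] using this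
    simp only [key]
    calc ∑ s, Real.sqrt (θτ i) * (Real.sqrt (d (z i)))⁻¹ * U (z i) s *
          (Real.sqrt (θτ j) * (Real.sqrt (d (z j)))⁻¹ * U (z j) s)
        = (Real.sqrt (θτ i) * (Real.sqrt (d (z i)))⁻¹) *
          (Real.sqrt (θτ j) * (Real.sqrt (d (z j)))⁻¹) * ∑ s, U (z i) s * U (z j) s := by
          rw [Finset.mul_sum]; congr 1; funext s; ring
      _ = 0 := by rw [horth, mul_zero]
end

section
/- Let A, B ∈ R^{N×N} be symmetric, and let P_A A denote the best rank-K approximation of A (the projection of A onto the span of its top K eigenvectors composed with A). Then for any matrix B of rank at most K, ‖P_A A − B‖_F² ≤ 8K‖A − B‖². -/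
/-! Â − B has rank at most 2K, and optimality of Â gives
‖Â − B‖ ≤ ‖A − Â‖ + ‖A − B‖ ≤ 2‖A − B‖. For any matrix M, ‖M‖_F² = tr(MᴴM) is the sum of the
eigenvalues of MᴴM; at most rank M of them are nonzero, and each is at most ‖MᴴM‖ = ‖M‖². -/

open Matrix

noncomputable def specNorm {N : ℕ} (A : Matrix (Fin N) (Fin N) ℝ) : ℝ :=
  ‖Matrix.toEuclideanCLM (𝕜 := ℝ) A‖

noncomputable def frobNorm {N : ℕ} (A : Matrix (Fin N) (Fin N) ℝ) : ℝ :=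
  Real.sqrt (∑ i, ∑ j, (A i j) ^ 2)

open scoped Matrix.Norms.L2Operator

namespace Matrix

section Rank

variable {m n K : Type*} [Fintype n] [Field K]

theorem rank_add_le (A B : Matrix m n K) : (A + B).rank ≤ A.rank + B.rank := by
  rw [rank, mulVecLin_add]
  exact (Submodule.finrank_mono (LinearMap.range_add_le _ _)).trans
    (Submodule.finrank_add_le_finrank_add_finrank _ _)

@[simp]
theorem rank_neg (A : Matrix m n K) : (-A).rank = A.rank := by
  have h : (-A).mulVecLin = -A.mulVecLin := LinearMap.ext fun v => neg_mulVec v A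
  rw [rank, h, LinearMap.range_neg, rank]

theorem rank_sub_le (A B : Matrix m n K) : (A - B).rank ≤ A.rank + B.rank := by
  simpa [sub_eq_add_neg] using rank_add_le A (-B)

end Rank

section Hermitian

open scoped ComplexOrder

variable {m n 𝕜 : Type*} [Fintype m] [Fintype n] [DecidableEq n] [RCLike 𝕜]

theorem IsHermitian.abs_eigenvalues_le_l2_opNorm {A : Matrix n n 𝕜} (hA : A.IsHermitian) (i : n) :
    |hA.eigenvalues i| ≤ ‖A‖ := by
  have h := A.l2_opNorm_mulVec (hA.eigenvectorBasis i)
  rw [hA.mulVec_eigenvectorBasis] at h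
  simpa [norm_smul, hA.eigenvectorBasis.orthonormal.1 i] using h

theorem IsHermitian.re_trace_le_rank_mul {A : Matrix n n 𝕜} (hA : A.IsHermitian) {c : ℝ}
    (hc : ∀ i, hA.eigenvalues i ≤ c) : RCLike.re A.trace ≤ A.rank * c := by
  classical
  rw [hA.trace_eq_sum_eigenvalues, hA.rank_eq_card_non_zero_eigs, Fintype.card_subtype]
  simp only [map_sum, RCLike.ofReal_re]
  rw [← Finset.sum_filter_ne_zero]
  simpa using Finset.sum_le_card_nsmul _ _ _ fun i _ => hc i

theorem eigenvalues_conjTranspose_mul_self_le (M : Matrix m n 𝕜) (i : n) :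
    (isHermitian_conjTranspose_mul_self M).eigenvalues i ≤ ‖M‖ ^ 2 := by
  rw [sq, ← l2_opNorm_conjTranspose_mul_self]
  exact (le_abs_self _).trans
    ((isHermitian_conjTranspose_mul_self M).abs_eigenvalues_le_l2_opNorm i)

theorem re_trace_conjTranspose_mul_self_le_rank_mul_sq (M : Matrix m n 𝕜) :
    RCLike.re (Mᴴ * M).trace ≤ M.rank * ‖M‖ ^ 2 := by
  rw [← rank_conjTranspose_mul_self]
  exact (isHermitian_conjTranspose_mul_self M).re_trace_le_rank_mul
    (eigenvalues_conjTranspose_mul_self_le M)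

end Hermitian

end Matrix

theorem specNorm_eq_l2_opNorm {N : ℕ} (A : Matrix (Fin N) (Fin N) ℝ) : specNorm A = ‖A‖ := rfl

theorem frobNorm_sq_eq_trace {N : ℕ} (M : Matrix (Fin N) (Fin N) ℝ) :
    frobNorm M ^ 2 = (Mᵀ * M).trace := by
  rw [frobNorm, Real.sq_sqrt (by positivity), Finset.sum_comm]
  simp [trace, mul_apply, sq]

theorem frobNorm_sq_le_rank_mul_specNorm_sq {N : ℕ} (M : Matrix (Fin N) (Fin N) ℝ) :
    frobNorm M ^ 2 ≤ M.rank * specNorm M ^ 2 := by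
  simpa [frobNorm_sq_eq_trace, specNorm_eq_l2_opNorm] using
    re_trace_conjTranspose_mul_self_le_rank_mul_sq M

theorem best_rank_K_approximation_frobenius_bound_general
    (N K : ℕ) (A Ahat B : Matrix (Fin N) (Fin N) ℝ)
    (hrank : Ahat.rank ≤ K)
    (hopt : ∀ X : Matrix (Fin N) (Fin N) ℝ, X.rank ≤ K →
      specNorm (A - Ahat) ≤ specNorm (A - X))
    (hB : B.rank ≤ K) :
    frobNorm (Ahat - B) ^ 2 ≤ 8 * K * specNorm (A - B) ^ 2 := by
  have hrank_sub : ((Ahat - B).rank : ℝ) ≤ 2 * K := by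
    exact_mod_cast (rank_sub_le Ahat B).trans (by omega)
  have hnorm_sub : specNorm (Ahat - B) ≤ 2 * specNorm (A - B) := by
    have hsplit : Ahat - B = (A - B) - (A - Ahat) := by abel
    simp only [specNorm_eq_l2_opNorm] at hopt ⊢
    linarith [hsplit ▸ norm_sub_le (A - B) (A - Ahat), hopt B hB]
  calc frobNorm (Ahat - B) ^ 2 ≤ (Ahat - B).rank * specNorm (Ahat - B) ^ 2 :=
        frobNorm_sq_le_rank_mul_specNorm_sq _
    _ ≤ (2 * K) * (2 * specNorm (A - B)) ^ 2 := by
        gcongr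
        exact norm_nonneg _
    _ = 8 * K * specNorm (A - B) ^ 2 := by ring

/-- McSherry's lemma: if `Ahat` is a best rank-K approximation of the
symmetric matrix A in spectral norm (e.g. `P_A A`), then for any matrix B of rank at most
K, ‖Ahat − B‖_F² ≤ 8K‖A − B‖². -/
theorem best_rank_K_approximation_frobenius_bound
    (N K : ℕ) (A Ahat B : Matrix (Fin N) (Fin N) ℝ)
    (hA : A.IsHermitian)
    (hrank : Ahat.rank ≤ K)
    (hopt : ∀ X : Matrix (Fin N) (Fin N) ℝ, X.rank ≤ K →
      specNorm (A - Ahat) ≤ specNorm (A - X))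
    (hB : B.rank ≤ K) :
    frobNorm (Ahat - B) ^ 2 ≤ 8 * K * specNorm (A - B) ^ 2 :=
  best_rank_K_approximation_frobenius_bound_general N K A Ahat B hrank hopt hB
end
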